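/- Let N ≥ 1 and let ℤ₂^{*N} denote the free product of N copies of the cyclic group of order 2. Then there exist an index set I, a function d : I → ℕ, and an injective ℂ-algebra homomorphism f from the group algebra ℂ[ℤ₂^{*N}] to the direct product ∏_{i ∈ I} M_{d(i)}(ℂ) of complex matrix algebras, which respects the star operations: f(x*) = f(x)* for all x ∈ ℂ[ℤ₂^{*N}]. -/

import Mathlib

/-- The star operation on the group algebra `ℂ[Γ]`, determined `ℂ`-antilinearly by
`g* = g⁻¹`: the star of the basis element at `g` with coefficient `a` is the basis
element at `g⁻¹` with coefficient the complex conjugate of `a`. -/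
noncomputable def groupAlgebraStar (Γ : Type) [Group Γ]
    (x : MonoidAlgebra ℂ Γ) : MonoidAlgebra ℂ Γ :=
  MonoidAlgebra.ofCoeff (Finsupp.mapDomain (fun g => g⁻¹)
    (Finsupp.mapRange (starRingEnd ℂ) (map_zero _) x.coeff))

/-- The free product `ℤ₂^{*N}` of `N` copies of the cyclic group of order two. -/
abbrev FreeProductZTwo (N : ℕ) : Type :=
  Monoid.CoprodI (fun _ : Fin N => Multiplicative (ZMod 2))

namespace RFAux

open Monoid List

variable {N : ℕ}

/-- The basic involution on `{0, ..., R.length}` attached to an index `j`: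
swap `m ↔ m+1` whenever `R[m] = j`. -/
def natInv (R : List (Fin N)) (j : Fin N) (m : ℕ) : ℕ :=
  if R[m]? = some j then m + 1
  else if 0 < m ∧ R[m - 1]? = some j then m - 1
  else m

lemma not_adjacent {R : List (Fin N)} (hR : R.Chain' (· ≠ ·)) {m : ℕ} {j : Fin N}
    (h1 : R[m]? = some j) (h2 : R[m + 1]? = some j) : False := by
  obtain ⟨hm1, he1⟩ := List.getElem?_eq_some_iff.mp h1
  obtain ⟨hm2, he2⟩ := List.getElem?_eq_some_iff.mp h2
  have := List.isChain_iff_getElem.mp hR m (by omega)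
  exact this (he1.trans he2.symm)

lemma natInv_natInv {R : List (Fin N)} (hR : R.Chain' (· ≠ ·)) (j : Fin N) (m : ℕ) :
    natInv R j (natInv R j m) = m := by
  unfold natInv
  by_cases h1 : R[m]? = some j
  · simp only [if_pos h1]
    have hne : ¬ R[m + 1]? = some j := fun h => (not_adjacent hR h1 h).elim
    simp only [if_neg hne]
    have : 0 < m + 1 ∧ R[m + 1 - 1]? = some j := ⟨Nat.succ_pos _, by simpa using h1⟩
    simp only [if_pos this]
    omega
  · simp only [if_neg h1]
    by_cases h2 : 0 < m ∧ R[m - 1]? = some j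
    · simp only [if_pos h2, if_pos h2.2]
      omega
    · simp only [if_neg h2, if_neg h1, if_neg h2]

lemma natInv_lt (R : List (Fin N)) (j : Fin N) {m : ℕ} (h : m < R.length + 1) :
    natInv R j m < R.length + 1 := by
  unfold natInv
  split_ifs with h1 h2
  · have := (List.getElem?_eq_some_iff.mp h1).1; omega
  · omega
  · omega

/-- The involution as a permutation of `Fin (R.length + 1)`. -/
def permOf (R : List (Fin N)) (hR : R.Chain' (· ≠ ·)) (j : Fin N) :
    Equiv.Perm (Fin (R.length + 1)) :=
  Function.Involutive.toPerm (fun m => ⟨natInv R j m.1, natInv_lt R j m.2⟩)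
    (fun m => Fin.ext (natInv_natInv hR j m.1))

lemma permOf_sq (R : List (Fin N)) (hR : R.Chain' (· ≠ ·)) (j : Fin N) :
    permOf R hR j * permOf R hR j = 1 := by
  ext m
  exact natInv_natInv hR j m.1

/-- A monoid hom `ℤ/2 →* Perm X` from an involution. -/
def genHom {X : Type} (τ : Equiv.Perm X) (hτ : τ * τ = 1) :
    Multiplicative (ZMod 2) →* Equiv.Perm X where
  toFun g := if g = 1 then 1 else τ
  map_one' := if_pos rfl
  map_mul' a b := by
    have hcase : ∀ g : Multiplicative (ZMod 2), g = 1 ∨ g = Multiplicative.ofAdd 1 := by decide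
    have hmul : (Multiplicative.ofAdd (1 : ZMod 2)) * Multiplicative.ofAdd (1 : ZMod 2) = 1 := by
      decide
    have hne : (Multiplicative.ofAdd (1 : ZMod 2)) ≠ 1 := by decide
    rcases hcase a with rfl | rfl <;> rcases hcase b with rfl | rfl <;>
      simp [hmul, hne, hτ]

lemma genHom_apply_ne {X : Type} (τ : Equiv.Perm X) (hτ : τ * τ = 1)
    {g : Multiplicative (ZMod 2)} (hg : g ≠ 1) : genHom τ hτ g = τ := if_neg hg

end RFAux

namespace RFAux

open Monoid List Equiv

variable {N : ℕ}

lemma eval_aux (J : List (Fin N)) (hR : J.reverse.Chain' (· ≠ ·)) :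
    ∀ t (ht : t ≤ J.length),
      (((J.drop (J.length - t)).map (fun i => permOf J.reverse hR i)).prod
          (⟨0, Nat.succ_pos _⟩ : Fin (J.reverse.length + 1))) =
        ⟨t, by rw [List.length_reverse]; omega⟩ := by
  intro t
  induction t with
  | zero =>
    intro _
    simp only [Nat.sub_zero, List.drop_length, List.map_nil, List.prod_nil]
    rfl
  | succ t ih =>
    intro ht
    have hlt : J.length - (t + 1) < J.length := by omega
    rw [List.drop_eq_getElem_cons hlt]
    have hidx : J.length - (t + 1) + 1 = J.length - t := by omega
    rw [hidx, List.map_cons, List.prod_cons, Equiv.Perm.mul_apply, ih (by omega)]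
    apply Fin.ext
    show natInv J.reverse (J[J.length - (t + 1)]'hlt) t = t + 1
    have hget : J.reverse[t]? = some (J[J.length - (t + 1)]'hlt) := by
      have h1 : J.reverse[t]? = J[J.length - 1 - t]? := List.getElem?_reverse (by omega)
      have h2 : J.length - 1 - t = J.length - (t + 1) := by omega
      rw [h1, h2, List.getElem?_eq_getElem hlt]
    unfold natInv
    rw [if_pos hget]

/-- Pointwise separation: every nontrivial element of `ℤ₂^{*N}` survives in some
finite permutation representation. -/
lemma exists_sep_one (w : FreeProductZTwo N) (hw : w ≠ 1) :
    ∃ m : ℕ, 0 < m ∧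
      ∃ φ : FreeProductZTwo N →* Equiv.Perm (Fin m), φ w ≠ 1 := by
  classical
  set W := Monoid.CoprodI.Word.equiv (M := fun _ : Fin N => Multiplicative (ZMod 2)) w with hWdef
  have hprod : W.prod = w := Monoid.CoprodI.Word.equiv.symm_apply_apply w
  set J : List (Fin N) := W.toList.map Sigma.fst with hJdef
  have hJ : J.Chain' (· ≠ ·) := (List.isChain_map Sigma.fst).mpr W.chain_ne
  have hR : J.reverse.Chain' (· ≠ ·) :=
    List.isChain_reverse.mpr (hJ.imp fun _ _ h => Ne.symm h)
  have hk : 0 < J.length := by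
    rcases Nat.eq_zero_or_pos J.length with h0 | h
    · exfalso
      have hnil : W.toList = [] := by
        have := List.length_map (as := W.toList) (Sigma.fst (β := fun _ : Fin N => Multiplicative (ZMod 2)))
        rw [← hJdef] at this
        exact List.length_eq_zero_iff.mp (by omega)
      apply hw
      rw [← hprod]
      unfold Monoid.CoprodI.Word.prod
      rw [hnil]
      simp
    · exact h
  refine ⟨J.reverse.length + 1, Nat.succ_pos _,
    Monoid.CoprodI.lift (fun i => genHom (permOf J.reverse hR i) (permOf_sq _ _ _)), ?_⟩
  set φ := Monoid.CoprodI.lift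
    (fun i => genHom (permOf J.reverse hR i) (permOf_sq J.reverse hR i)) with hφdef
  have hmap : φ w = (J.map (fun i => permOf J.reverse hR i)).prod := by
    conv_lhs => rw [← hprod]
    show φ (List.prod (W.toList.map fun l => Monoid.CoprodI.of l.snd)) = _
    rw [map_list_prod, List.map_map]
    have hcongr : W.toList.map (⇑φ ∘ fun l => Monoid.CoprodI.of l.snd)
        = W.toList.map ((fun i => permOf J.reverse hR i) ∘ Sigma.fst) :=
      List.map_congr_left fun l hl => by
        show φ (Monoid.CoprodI.of l.snd) = _
        rw [hφdef, Monoid.CoprodI.lift_of]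
        exact genHom_apply_ne _ _ (W.ne_one l hl)
    rw [hcongr]
    exact (congrArg List.prod (List.map_map (f := Sigma.fst) (l := W.toList))).symm
  intro hone
  have := eval_aux J hR J.length le_rfl
  rw [Nat.sub_self, List.drop_zero, ← hmap, hone] at this
  have h0 : (0 : ℕ) = J.length := congrArg Fin.val this
  omega

/-- Conjugating permutations by an equivalence, as a monoid hom. -/
def permCongrHom {α β : Type} (e : α ≃ β) : Equiv.Perm α →* Equiv.Perm β where
  toFun σ := e.permCongr σ
  map_one' := by ext x; simp
  map_mul' σ τ := by
    ext x
    simp [Equiv.permCongr_apply, Equiv.Perm.mul_apply]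

lemma permCongrHom_ne_one {α β : Type} (e : α ≃ β) {σ : Equiv.Perm α} (h : σ ≠ 1) :
    permCongrHom e σ ≠ 1 := by
  intro hc
  apply h
  ext x
  have := congrArg (fun τ : Equiv.Perm β => τ (e x)) hc
  simpa [permCongrHom, Equiv.permCongr_apply] using this

/-- Separating a finite set of nontrivial elements simultaneously. -/
lemma exists_sep_finset (T : Finset (FreeProductZTwo N)) (hT : (1 : FreeProductZTwo N) ∉ T) :
    ∃ m : ℕ, 0 < m ∧
      ∃ φ : FreeProductZTwo N →* Equiv.Perm (Fin m), ∀ w ∈ T, φ w ≠ 1 := by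
  classical
  induction T using Finset.induction_on with
  | empty => exact ⟨1, Nat.one_pos, 1, by simp⟩
  | @insert w T hwT ih =>
    obtain ⟨m₁, hm₁, φ₁, hφ₁⟩ := ih (fun h => hT (Finset.mem_insert_of_mem h))
    obtain ⟨m₂, hm₂, φ₂, hφ₂⟩ := exists_sep_one w (fun h => hT (h ▸ Finset.mem_insert_self _ _))
    refine ⟨m₁ + m₂, by omega,
      (permCongrHom finSumFinEquiv).comp
        ((Equiv.Perm.sumCongrHom (Fin m₁) (Fin m₂)).comp (φ₁.prod φ₂)), ?_⟩
    intro v hv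
    apply permCongrHom_ne_one
    intro hc
    have h1 : φ₁ v = 1 ∧ φ₂ v = 1 := by
      constructor
      · apply Equiv.ext; intro a
        have := congrArg (fun τ : Equiv.Perm (Fin m₁ ⊕ Fin m₂) => τ (Sum.inl a)) hc
        simpa [Equiv.Perm.sumCongrHom, MonoidHom.prod_apply] using this
      · apply Equiv.ext; intro a
        have := congrArg (fun τ : Equiv.Perm (Fin m₁ ⊕ Fin m₂) => τ (Sum.inr a)) hc
        simpa [Equiv.Perm.sumCongrHom, MonoidHom.prod_apply] using this
    rcases Finset.mem_insert.mp hv with rfl | hvT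
    · exact hφ₂ h1.2
    · exact hφ₁ v hvT h1.1

/-- Injectivity on finite sets: residual finiteness in the form needed. -/
lemma exists_injOn (S : Finset (FreeProductZTwo N)) :
    ∃ m : ℕ, ∃ φ : FreeProductZTwo N →* Equiv.Perm (Fin m), Set.InjOn φ S := by
  classical
  set T : Finset (FreeProductZTwo N) :=
    ((S ×ˢ S).filter (fun p => p.1 ≠ p.2)).image (fun p => p.1⁻¹ * p.2) with hTdef
  have hT : (1 : FreeProductZTwo N) ∉ T := by
    intro h
    obtain ⟨p, hp, hp1⟩ := Finset.mem_image.mp h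
    have := (Finset.mem_filter.mp hp).2
    exact this (by rwa [inv_mul_eq_one] at hp1)
  obtain ⟨m, _, φ, hφ⟩ := exists_sep_finset T hT
  refine ⟨m, φ, fun s hs t ht hst => ?_⟩
  by_contra hne
  apply hφ (s⁻¹ * t)
    (Finset.mem_image.mpr ⟨(s, t), Finset.mem_filter.mpr ⟨Finset.mem_product.mpr ⟨hs, ht⟩, hne⟩, rfl⟩)
  rw [map_mul, map_inv, hst, inv_mul_cancel]

end RFAux

namespace RFAux

open MonoidAlgebra Matrix

variable (G : Type) [Group G] [Fintype G] [DecidableEq G]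

/-- The left regular representation of a finite group by permutation matrices. -/
def regRep : G →* Matrix G G ℂ where
  toFun g := Matrix.of fun a b => if a = g * b then 1 else 0
  map_one' := by
    ext a b
    simp [Matrix.one_apply]
  map_mul' g h := by
    ext a b
    simp only [Matrix.mul_apply, Matrix.of_apply]
    rw [Finset.sum_eq_single (h * b)]
    · simp [mul_assoc]
    · intro c _ hc
      rw [if_neg hc, mul_zero]
    · intro hmem
      exact absurd (Finset.mem_univ _) hmem

lemma regRep_apply (g a b : G) : regRep G g a b = if a = g * b then 1 else 0 := rfl

lemma regRep_conjTranspose (g : G) : (regRep G g)ᴴ = regRep G g⁻¹ := by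
  ext a b
  rw [Matrix.conjTranspose_apply, regRep_apply, regRep_apply]
  have hiff : (b = g * a) ↔ (a = g⁻¹ * b) := by
    constructor <;> (rintro rfl; simp)
  split_ifs with h1 h2 h2
  · simp
  · exact absurd (hiff.mp h1) h2
  · exact absurd (hiff.mpr h2) h1
  · simp

/-- The lift of a matrix representation is star-preserving provided the
representation sends inverses to conjugate transposes. -/
lemma lift_star {Γ : Type} [Group Γ] {n : Type} [Fintype n] [DecidableEq n]
    (Φ : Γ →* Matrix n n ℂ) (hΦ : ∀ g, (Φ g)ᴴ = Φ g⁻¹) (x : MonoidAlgebra ℂ Γ) :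
    (MonoidAlgebra.lift ℂ (Matrix n n ℂ) Γ Φ) (groupAlgebraStar Γ x) =
      ((MonoidAlgebra.lift ℂ (Matrix n n ℂ) Γ Φ) x)ᴴ := by
  induction x using MonoidAlgebra.induction_linear with
  | zero => simp [groupAlgebraStar]
  | add f g hf hg =>
    have : groupAlgebraStar Γ (f + g) = groupAlgebraStar Γ f + groupAlgebraStar Γ g := by
      unfold groupAlgebraStar
      rw [MonoidAlgebra.coeff_add, Finsupp.mapRange_add (map_add _), Finsupp.mapDomain_add,
        MonoidAlgebra.ofCoeff_add]
    rw [this, map_add, map_add, Matrix.conjTranspose_add, hf, hg]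
  | single a b =>
    have : groupAlgebraStar Γ (MonoidAlgebra.single a b) =
        MonoidAlgebra.single a⁻¹ ((starRingEnd ℂ) b) := by
      unfold groupAlgebraStar
      rw [MonoidAlgebra.coeff_single, Finsupp.mapRange_single, Finsupp.mapDomain_single]
      rfl
    rw [this]
    show (MonoidAlgebra.lift ℂ (Matrix n n ℂ) Γ Φ) (MonoidAlgebra.single a⁻¹ ((starRingEnd ℂ) b)) = _
    rw [MonoidAlgebra.lift_single]
    show _ = ((MonoidAlgebra.lift ℂ (Matrix n n ℂ) Γ Φ) (MonoidAlgebra.single a b))ᴴ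
    rw [MonoidAlgebra.lift_single, Matrix.conjTranspose_smul, hΦ]
    rfl

end RFAux

namespace RFAux

open MonoidAlgebra Matrix

lemma lift_regRep_ne_zero {Γ : Type} [Group Γ]
    (G : Type) [Group G] [Fintype G] [DecidableEq G] (φ : Γ →* G)
    {x : MonoidAlgebra ℂ Γ} (hx : x ≠ 0) (hinj : Set.InjOn φ x.coeff.support) :
    (MonoidAlgebra.lift ℂ (Matrix G G ℂ) Γ ((regRep G).comp φ)) x ≠ 0 := by
  classical
  obtain ⟨h, hh⟩ : ∃ a, x.coeff a ≠ 0 := by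
    by_contra hc
    push_neg at hc
    exact hx (MonoidAlgebra.ext (Finsupp.ext hc))
  have hmem : h ∈ x.coeff.support := Finsupp.mem_support_iff.mpr hh
  intro hzero
  have hentry : ((MonoidAlgebra.lift ℂ (Matrix G G ℂ) Γ ((regRep G).comp φ)) x) (φ h) 1 = 0 := by
    rw [hzero]; rfl
  rw [MonoidAlgebra.lift_apply, Finsupp.sum, Matrix.sum_apply] at hentry
  have hsum : ∀ a ∈ x.coeff.support,
      (x.coeff a • ((regRep G).comp φ) a) (φ h) 1 = if φ h = φ a then x.coeff a else 0 := by
    intro a _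
    rw [Matrix.smul_apply, MonoidHom.comp_apply, regRep_apply, mul_one]
    split_ifs <;> simp
  rw [Finset.sum_congr rfl hsum, Finset.sum_eq_single h] at hentry
  · rw [if_pos rfl] at hentry
    exact hh hentry
  · intro a ha hne
    rw [if_neg]
    intro hc
    exact hne (hinj ha hmem hc.symm)
  · intro hns
    exact absurd hmem hns

lemma reindex_conjTranspose {n m : Type} [Fintype n] [DecidableEq n] [Fintype m] [DecidableEq m]
    (e : n ≃ m) (M : Matrix n n ℂ) :
    (Matrix.reindexAlgEquiv ℂ ℂ e M)ᴴ = Matrix.reindexAlgEquiv ℂ ℂ e Mᴴ := by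
  ext a b
  simp [Matrix.conjTranspose_apply]

end RFAux


open RFAux Matrix in
/-- For every `N ≥ 1`, the group algebra `ℂ[ℤ₂^{*N}]` of the free product of `N`
copies of `ℤ/2ℤ` (the CQG algebra `𝒪(T⁺_N)` of the maximal torus of the free
orthogonal group `O⁺_N`) admits an injective, star-preserving `ℂ`-algebra
homomorphism into a direct product `∏ i, M_{d i}(ℂ)` of complex matrix algebras;
i.e. the discrete quantum group dual to `T⁺_N` is residually finite. -/
theorem freeProductZTwoAlgebra_embeds_in_prod_matrix
    (N : ℕ) (hN : 1 ≤ N) :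
    ∃ (I : Type) (d : I → ℕ)
      (f : MonoidAlgebra ℂ (FreeProductZTwo N) →ₐ[ℂ]
        ∀ i : I, Matrix (Fin (d i)) (Fin (d i)) ℂ),
      Function.Injective f ∧
        ∀ x, f (groupAlgebraStar (FreeProductZTwo N) x) = star (f x) := by
  classical
  have H : ∀ x : MonoidAlgebra ℂ (FreeProductZTwo N), ∃ mm : ℕ,
      ∃ ψ : FreeProductZTwo N →* Equiv.Perm (Fin mm), Set.InjOn ψ x.coeff.support :=
    fun x => RFAux.exists_injOn x.coeff.support
  choose m φ hφ using H
  refine ⟨MonoidAlgebra ℂ (FreeProductZTwo N),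
    fun x => Fintype.card (Equiv.Perm (Fin (m x))),
    Pi.algHom ℂ _ (fun x =>
      ((Matrix.reindexAlgEquiv ℂ ℂ (Fintype.equivFin (Equiv.Perm (Fin (m x))))).toAlgHom).comp
        (MonoidAlgebra.lift ℂ
          (Matrix (Equiv.Perm (Fin (m x))) (Equiv.Perm (Fin (m x))) ℂ) (FreeProductZTwo N)
          ((regRep (Equiv.Perm (Fin (m x)))).comp (φ x)))), ?_, ?_⟩
  · rw [injective_iff_map_eq_zero]
    intro x hx0
    by_contra hxne
    have hcomp : (Matrix.reindexAlgEquiv ℂ ℂ (Fintype.equivFin (Equiv.Perm (Fin (m x)))))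
        ((MonoidAlgebra.lift ℂ
          (Matrix (Equiv.Perm (Fin (m x))) (Equiv.Perm (Fin (m x))) ℂ) (FreeProductZTwo N)
          ((regRep (Equiv.Perm (Fin (m x)))).comp (φ x))) x) = 0 := congrFun hx0 x
    have hlift : (MonoidAlgebra.lift ℂ
        (Matrix (Equiv.Perm (Fin (m x))) (Equiv.Perm (Fin (m x))) ℂ) (FreeProductZTwo N)
        ((regRep (Equiv.Perm (Fin (m x)))).comp (φ x))) x = 0 := by
      apply (Matrix.reindexAlgEquiv ℂ ℂ (Fintype.equivFin (Equiv.Perm (Fin (m x))))).injective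
      rw [map_zero]
      exact hcomp
    exact lift_regRep_ne_zero _ (φ x) hxne (hφ x) hlift
  · intro x
    funext i
    have hΦ : ∀ g : FreeProductZTwo N,
        (((regRep (Equiv.Perm (Fin (m i)))).comp (φ i)) g)ᴴ
          = ((regRep (Equiv.Perm (Fin (m i)))).comp (φ i)) g⁻¹ := by
      intro g
      rw [MonoidHom.comp_apply, MonoidHom.comp_apply, regRep_conjTranspose, map_inv (φ i) g]
    show (Matrix.reindexAlgEquiv ℂ ℂ (Fintype.equivFin (Equiv.Perm (Fin (m i)))))
        ((MonoidAlgebra.lift ℂ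
          (Matrix (Equiv.Perm (Fin (m i))) (Equiv.Perm (Fin (m i))) ℂ) (FreeProductZTwo N)
          ((regRep (Equiv.Perm (Fin (m i)))).comp (φ i))) (groupAlgebraStar (FreeProductZTwo N) x))
      = star ((Matrix.reindexAlgEquiv ℂ ℂ (Fintype.equivFin (Equiv.Perm (Fin (m i)))))
        ((MonoidAlgebra.lift ℂ
          (Matrix (Equiv.Perm (Fin (m i))) (Equiv.Perm (Fin (m i))) ℂ) (FreeProductZTwo N)
          ((regRep (Equiv.Perm (Fin (m i)))).comp (φ i))) x))
    rw [lift_star _ hΦ, ← reindex_conjTranspose, Matrix.star_eq_conjTranspose]
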